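/- Let n ≥ 1 and h a permutation of a finite set with n elements. The number of orbits of ⟨h⟩ equals 1 if and only if h is a cycle of length n (i.e., h acts transitively). Consequently, the plat closure of a 2n-strand spherical braid is a knot (one component) if and only if its residual permutation acts transitively on ZMod n. -/
import Mathlib

lemma aux_orbit_count {α : Type} [Nonempty α] (h : Equiv.Perm α) :
    Nat.card (MulAction.orbitRel.Quotient (Subgroup.zpowers h) α) = 1 ↔
      ∀ x y : α, ∃ m : ℤ, (h ^ m) x = y := by
  rw [Nat.card_eq_one_iff_unique]
  constructor
  · rintro ⟨hs, -⟩ x y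
    have : (⟦y⟧ : MulAction.orbitRel.Quotient (Subgroup.zpowers h) α) = ⟦x⟧ :=
      hs.elim _ _
    have hy : y ∈ MulAction.orbit (Subgroup.zpowers h) x := by
      rw [Quotient.eq''] at this
      exact (MulAction.orbitRel_apply.mp this)
    obtain ⟨⟨g, m, rfl⟩, hg⟩ := hy
    exact ⟨m, hg⟩
  · intro ht
    refine ⟨⟨fun a b => ?_⟩, Nonempty.map Quotient.mk'' ‹Nonempty α›⟩
    obtain ⟨x, rfl⟩ := Quotient.exists_rep a
    obtain ⟨y, rfl⟩ := Quotient.exists_rep b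
    obtain ⟨m, hm⟩ := ht y x
    refine Quotient.sound (MulAction.orbitRel_apply.mpr ⟨⟨h ^ m, m, rfl⟩, hm⟩)

/-- for a finite type `α` with `n ≥ 1` elements, a permutation `h` of `α`
has exactly one orbit iff `⟨h⟩` acts transitively (i.e. `h` is an `n`-cycle);
consequently the plat closure of a `2n`-strand spherical braid is a knot iff its
residual permutation acts transitively on `ZMod n`. -/
theorem orbit_count_eq_one_iff_transitive (n : ℕ) (hn : 1 ≤ n) :
    (∀ (α : Type) [Fintype α], Fintype.card α = n → ∀ h : Equiv.Perm α,
      Nat.card (MulAction.orbitRel.Quotient (Subgroup.zpowers h) α) = 1 ↔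
        ∀ x y : α, ∃ m : ℤ, (h ^ m) x = y) ∧
    (∀ h : Equiv.Perm (ZMod n),
      Nat.card (MulAction.orbitRel.Quotient (Subgroup.zpowers h) (ZMod n)) = 1 ↔
        ∀ x y : ZMod n, ∃ m : ℤ, (h ^ m) x = y) := by
  constructor
  · intro α _ hcard h
    have : Nonempty α := Fintype.card_pos_iff.mp (hcard ▸ hn)
    exact aux_orbit_count h
  · intro h
    have : NeZero n := ⟨Nat.one_le_iff_ne_zero.mp hn⟩
    exact aux_orbit_count h
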